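/- arXiv:2310.14148 — 5 statements merged into one kernel-verified Lean document; each statement's English description precedes it below -/
import Mathlib

section
/- Let f : ℝ^d → ℝ be convex and Ω ⊆ ℝ^d nonempty, closed, and convex. A point x̄ ∈ Ω is a global minimizer of f over Ω if and only if 0 ∈ ∂f(x̄) + N(x̄; Ω). -/
open scoped RealInnerProductSpace Pointwise

/-- For convex `f` and nonempty closed convex `Ω`, `xbar ∈ Ω` is a global minimizer of
`f` over `Ω` iff `0 ∈ ∂f(xbar) + N(xbar;Ω)`. -/
theorem stmt_5 {d : ℕ} (f : EuclideanSpace ℝ (Fin d) → ℝ)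
    (hf : ConvexOn ℝ Set.univ f)
    (Ω : Set (EuclideanSpace ℝ (Fin d)))
    (hne : Ω.Nonempty) (hcl : IsClosed Ω) (hconv : Convex ℝ Ω)
    (xbar : EuclideanSpace ℝ (Fin d)) (hxbar : xbar ∈ Ω) :
    (∀ x ∈ Ω, f xbar ≤ f x) ↔
      (0 : EuclideanSpace ℝ (Fin d)) ∈
        {v | ∀ z, ⟪v, z - xbar⟫ ≤ f z - f xbar} + {v | ∀ z ∈ Ω, ⟪v, z - xbar⟫ ≤ 0} := by
  constructor
  · intro hmin
    have hfc : Continuous f := by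
      have := hf.continuousOn isOpen_univ
      exact continuousOn_univ.mp this
    set S : Set (EuclideanSpace ℝ (Fin d) × ℝ) :=
      {q | f (xbar + q.1) - f xbar < q.2} with hSdef
    set T : Set (EuclideanSpace ℝ (Fin d) × ℝ) :=
      {q | xbar + q.1 ∈ Ω ∧ q.2 ≤ 0} with hTdef
    have hSopen : IsOpen S :=
      isOpen_lt (((hfc.comp (continuous_const.add continuous_fst)).sub continuous_const))
        continuous_snd
    have hfst : ∀ (q r : EuclideanSpace ℝ (Fin d) × ℝ) (a b : ℝ), a + b = 1 →
        a • (xbar + q.1) + b • (xbar + r.1) = xbar + (a • q + b • r).1 := by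
      intro q r a b hab
      simp only [Prod.fst_add, Prod.smul_fst, smul_add]
      rw [show a • xbar + a • q.1 + (b • xbar + b • r.1)
          = (a + b) • xbar + (a • q.1 + b • r.1) by rw [add_smul]; abel, hab, one_smul]
    have hsnd : ∀ (q r : EuclideanSpace ℝ (Fin d) × ℝ) (a b : ℝ),
        (a • q + b • r).2 = a * q.2 + b * r.2 := by
      intro q r a b
      simp [Prod.snd_add, Prod.smul_snd, smul_eq_mul]
    have hSconv : Convex ℝ S := by
      intro q hq r hr a b ha hb hab
      simp only [hSdef, Set.mem_setOf_eq] at *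
      have hmem : f (xbar + (a • q + b • r).1) ≤
          a * f (xbar + q.1) + b * f (xbar + r.1) := by
        rw [← hfst q r a b hab]
        simpa [smul_eq_mul] using hf.2 (Set.mem_univ (xbar + q.1)) (Set.mem_univ (xbar + r.1)) ha hb hab
      rw [hsnd q r a b]
      have e3 : a * f xbar + b * f xbar = f xbar := by rw [← add_mul, hab, one_mul]
      rcases lt_or_eq_of_le ha with hpos | hzero
      · have e1 := mul_lt_mul_of_pos_left hq hpos
        have e2 := mul_le_mul_of_nonneg_left hr.le hb
        rw [mul_sub] at e1
        rw [mul_sub] at e2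
        linarith
      · have hb1 : b = 1 := by linarith
        have ha0 : a = 0 := hzero.symm
        rw [ha0, hb1] at hmem ⊢
        simp only [zero_mul, one_mul, zero_add] at hmem ⊢
        linarith
    have hTconv : Convex ℝ T := by
      intro q hq r hr a b ha hb hab
      obtain ⟨hq1, hq2⟩ := hq
      obtain ⟨hr1, hr2⟩ := hr
      refine ⟨?_, ?_⟩
      · rw [← hfst q r a b hab]
        exact hconv hq1 hr1 ha hb hab
      · rw [hsnd q r a b]
        nlinarith
    have hdisj : Disjoint S T := by
      rw [Set.disjoint_left]
      rintro ⟨p, t⟩ hSm ⟨hT1, hT2⟩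
      simp only [hSdef, Set.mem_setOf_eq] at hSm
      have := hmin _ hT1
      simp only at hSm hT2
      linarith
    obtain ⟨φ, c, hS, hT⟩ := geometric_hahn_banach_open hSconv hSopen hTconv hdisj
    set a : ℝ := φ (0, 1) with ha_def
    have hφ : ∀ (p : EuclideanSpace ℝ (Fin d)) (t : ℝ), φ (p, t) = φ (p, 0) + t * a := by
      intro p t
      have h : (p, t) = (p, (0 : ℝ)) + t • ((0 : EuclideanSpace ℝ (Fin d)), (1 : ℝ)) := by
        simp [Prod.ext_iff]
      rw [h, map_add, map_smul, smul_eq_mul]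
    have hz : φ ((0 : EuclideanSpace ℝ (Fin d)), (0 : ℝ)) = 0 := by
      have h : ((0 : EuclideanSpace ℝ (Fin d)), (0 : ℝ)) = (0 : EuclideanSpace ℝ (Fin d) × ℝ) := rfl
      rw [h, map_zero]
    have hc0 : c ≤ 0 := by
      have := hT (0, 0) ⟨by simpa using hxbar, le_refl 0⟩
      linarith
    have hpos : ∀ t : ℝ, 0 < t → t * a < c := by
      intro t ht
      have := hS (0, t) (by simp [hSdef, ht])
      rw [hφ] at this
      linarith
    have hc0' : 0 ≤ c := by
      by_contra h
      push_neg at h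
      rcases le_or_gt 0 a with ha | ha
      · have := hpos 1 one_pos
        nlinarith
      · have hane : a ≠ 0 := ne_of_lt ha
        have htpos : 0 < c / (2 * a) := by
          rw [div_pos_iff]; right; exact ⟨h, by linarith⟩
        have h2 := hpos (c / (2 * a)) htpos
        have h3 : c / (2 * a) * a = c / 2 := by field_simp
        rw [h3] at h2
        linarith
    have hc : c = 0 := le_antisymm hc0 hc0'
    have haneg : a < 0 := by
      have := hpos 1 one_pos
      rw [hc] at this
      linarith
    have hane : a ≠ 0 := ne_of_lt haneg
    have hkey : ∀ p : EuclideanSpace ℝ (Fin d),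
        φ (p, 0) + a * (f (xbar + p) - f xbar) ≤ 0 := by
      intro p
      set s : ℝ := f (xbar + p) - f xbar with hs_def
      by_contra h
      push_neg at h
      set ε : ℝ := φ (p, 0) + a * s with hε
      have hε0 : 0 < ε := h
      have hden : (0:ℝ) < -2 * a := by linarith
      have ht : s < s + ε / (-2 * a) := by
        have : 0 < ε / (-2 * a) := div_pos hε0 hden
        linarith
      have hlt := hS (p, s + ε / (-2 * a)) (by simp only [hSdef, Set.mem_setOf_eq]; exact ht)
      rw [hφ, hc] at hlt
      have heq : φ (p, 0) + (s + ε / (-2 * a)) * a = ε / 2 := by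
        field_simp [hε]
        ring
      linarith
    set L : EuclideanSpace ℝ (Fin d) →L[ℝ] ℝ :=
      (-a)⁻¹ • φ.comp (ContinuousLinearMap.inl ℝ (EuclideanSpace ℝ (Fin d)) ℝ) with hL
    set u : EuclideanSpace ℝ (Fin d) :=
      (InnerProductSpace.toDual ℝ (EuclideanSpace ℝ (Fin d))).symm L with hu_def
    have hu_inner : ∀ p : EuclideanSpace ℝ (Fin d), ⟪u, p⟫ = (-a)⁻¹ * φ (p, 0) := by
      intro p
      rw [hu_def, InnerProductSpace.toDual_symm_apply]
      simp [hL]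
    have hna : (0:ℝ) < -a := by linarith
    have hainv : 0 < (-a)⁻¹ := inv_pos.mpr hna
    have hane' : (-a) ≠ 0 := ne_of_gt hna
    have hu_sub : u ∈ {v : EuclideanSpace ℝ (Fin d) | ∀ z, ⟪v, z - xbar⟫ ≤ f z - f xbar} := by
      intro z
      have h1 := hkey (z - xbar)
      have h2 : xbar + (z - xbar) = z := by abel
      rw [h2] at h1
      rw [hu_inner]
      have h4 : φ (z - xbar, 0) ≤ (-a) * (f z - f xbar) := by linarith
      calc (-a)⁻¹ * φ (z - xbar, 0) ≤ (-a)⁻¹ * ((-a) * (f z - f xbar)) :=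
            mul_le_mul_of_nonneg_left h4 hainv.le
        _ = f z - f xbar := by rw [← mul_assoc, inv_mul_cancel₀ hane', one_mul]
    have hu_norm : -u ∈ {v : EuclideanSpace ℝ (Fin d) | ∀ z ∈ Ω, ⟪v, z - xbar⟫ ≤ 0} := by
      intro z hz
      have h1 := hT (z - xbar, 0) (by simp [hTdef, hz])
      rw [hc] at h1
      have h2 : 0 ≤ ⟪u, z - xbar⟫ := by
        rw [hu_inner]
        exact mul_nonneg hainv.le h1
      rw [inner_neg_left]
      linarith
    rw [Set.mem_add]
    exact ⟨u, hu_sub, -u, hu_norm, add_neg_cancel u⟩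
  · rintro hmem x hx
    rw [Set.mem_add] at hmem
    obtain ⟨v, hv, w, hw, hvw⟩ := hmem
    have h1 := hv x
    have h2 := hw x hx
    have h3 : ⟪v + w, x - xbar⟫ = ⟪v, x - xbar⟫ + ⟪w, x - xbar⟫ := inner_add_left _ _ _
    rw [hvw] at h3
    simp only [inner_zero_left] at h3
    linarith
end

section
/- Let g, h : ℝ^d → ℝ be convex with g differentiable and ρ > 0 such that h is ρ-strongly convex, and f = g - h. If x* ∈ dom f is a global minimizer of f, then ∂h(x*) = { ∇g(x*) }. -/
open scoped RealInnerProductSpace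
open Filter Topology

lemma aux_slope_stmt12 {d : ℕ} {g : EuclideanSpace ℝ (Fin d) → ℝ}
    {G x : EuclideanSpace ℝ (Fin d)} (hg : HasGradientAt g G x)
    (u : EuclideanSpace ℝ (Fin d)) :
    Tendsto (fun t : ℝ => (g (x + t • u) - g x) / t) (𝓝[≠] 0) (𝓝 ⟪G, u⟫) := by
  have h1 : HasDerivAt (fun t : ℝ => x + t • u) u 0 := by
    simpa using ((hasDerivAt_id (0:ℝ)).smul_const u).const_add x
  have hline : HasDerivAt (fun t : ℝ => g (x + t • u)) ⟪G, u⟫ 0 := by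
    have h2 : HasFDerivAt g ((InnerProductSpace.toDual ℝ (EuclideanSpace ℝ (Fin d))) G)
        (x + (0:ℝ) • u) := by simpa using hg.hasFDerivAt
    have := h2.comp_hasDerivAt 0 h1
    simp at this; exact this
  have := hasDerivAt_iff_tendsto_slope.mp hline
  have he : slope (fun t : ℝ => g (x + t • u)) 0 = fun t : ℝ => (g (x + t • u) - g x) / t := by
    funext t
    simp [slope_def_field, div_eq_mul_inv, mul_comm]
  rwa [he] at this

/-- Toland's first-order necessary optimality condition for DC programming:
if `x*` is a global minimizer of `f = g - h` with `g` differentiable and `h`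
`ρ`-strongly convex, then `∂h(x*) = {∇g(x*)}`. -/
theorem stmt_12 {d : ℕ} (g h : EuclideanSpace ℝ (Fin d) → ℝ)
    (hg : ConvexOn ℝ Set.univ g)
    (g' : EuclideanSpace ℝ (Fin d) → EuclideanSpace ℝ (Fin d))
    (hg' : ∀ x, HasGradientAt g (g' x) x)
    (ρ : ℝ) (hρ : 0 < ρ)
    (hh : ConvexOn ℝ Set.univ (fun x => h x - ρ / 2 * ‖x‖ ^ 2))
    (xstar : EuclideanSpace ℝ (Fin d))
    (hmin : ∀ x, g xstar - h xstar ≤ g x - h x) :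
    {v | ∀ z, ⟪v, z - xstar⟫ ≤ h z - h xstar} = {g' xstar} := by
  -- h is convex
  have hconv : ConvexOn ℝ Set.univ h := by
    have hs : StrongConvexOn Set.univ ρ h := strongConvexOn_iff_convex.mpr hh
    exact hs.convexOn (fun r => by positivity)
  apply Set.eq_singleton_iff_unique_mem.mpr
  constructor
  · -- `g' xstar` is a subgradient of `h` at `xstar`
    intro z
    set u := z - xstar with hu
    -- for every t < 0 the slope bounds `h z - h xstar` from below
    have key : ∀ t : ℝ, t < 0 → (g (xstar + t • u) - g xstar) / t ≤ h z - h xstar := by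
      intro t ht
      set s : ℝ := -t with hs
      have hs0 : 0 < s := by simp [hs]; linarith
      set w : EuclideanSpace ℝ (Fin d) := xstar + t • u with hw
      have ha : (0:ℝ) ≤ 1 / (1 + s) := by positivity
      have hb : (0:ℝ) ≤ s / (1 + s) := by positivity
      have hab : 1 / (1 + s) + s / (1 + s) = 1 := by
        field_simp
      have h1sne : (1 + s) ≠ 0 := by positivity
      have hcomb : (1 / (1 + s)) • w + (s / (1 + s)) • z = xstar := by
        have hz : z = xstar + u := by rw [hu]; abel
        rw [hw, hz, hs]
        match_scalars <;> field_simp [show (1:ℝ) - t ≠ 0 from ne_of_gt (by linarith), show (1:ℝ) + -t ≠ 0 from ne_of_gt (by linarith)] <;> ring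
      have hcv := hconv.2 (Set.mem_univ w) (Set.mem_univ z) ha hb hab
      rw [hcomb] at hcv
      -- from the minimality of xstar : h xstar - h w ≥ g xstar - g w
      have hm : g xstar - g w ≤ h xstar - h w := by
        have := hmin w; linarith
      -- combine: s * (h z - h xstar) ≥ h xstar - h w
      have hkey : g xstar - g w ≤ s * (h z - h xstar) := by
        have := hcv
        have h1s : (0:ℝ) < 1 + s := by linarith
        have e : (1 + s) * ((1 / (1 + s)) * h w + (s / (1 + s)) * h z)
            = h w + s * h z := by field_simp
        have hmul : (1 + s) * h xstar ≤ h w + s * h z := by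
          calc (1 + s) * h xstar ≤ (1 + s) * ((1 / (1 + s)) * h w + (s / (1 + s)) * h z) :=
                (mul_le_mul_iff_right₀ h1s).mpr (by simpa using this)
            _ = h w + s * h z := e
        nlinarith
      -- rewrite slope
      have : (g (xstar + t • u) - g xstar) / t = (g xstar - g w) / s := by
        rw [← hw, hs, div_neg, ← neg_div, neg_sub]
      rw [this]
      rw [div_le_iff₀ hs0]
      linarith [hkey]
    -- take the limit t → 0⁻
    have htend : Tendsto (fun t : ℝ => (g (xstar + t • u) - g xstar) / t) (𝓝[<] 0)
        (𝓝 ⟪g' xstar, u⟫) :=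
      (aux_slope_stmt12 (hg' xstar) u).mono_left
        (nhdsWithin_mono 0 (fun t ht => ne_of_lt ht))
    have hle : ⟪g' xstar, u⟫ ≤ h z - h xstar := by
      refine le_of_tendsto htend ?_
      filter_upwards [self_mem_nhdsWithin] with t ht
      exact key t ht
    simpa using hle
  · -- uniqueness: any subgradient of h at xstar equals g' xstar
    intro v hv
    have hineq : ∀ u : EuclideanSpace ℝ (Fin d), ⟪v, u⟫ ≤ ⟪g' xstar, u⟫ := by
      intro u
      have key : ∀ t : ℝ, 0 < t → ⟪v, u⟫ ≤ (g (xstar + t • u) - g xstar) / t := by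
        intro t ht
        have h1 := hv (xstar + t • u)
        have h2 := hmin (xstar + t • u)
        have h3 : ⟪v, t • u⟫ ≤ g (xstar + t • u) - g xstar := by
          have : xstar + t • u - xstar = t • u := by abel
          rw [this] at h1
          linarith
        rw [real_inner_smul_right] at h3
        rw [le_div_iff₀ ht]
        linarith [h3]
      have htend : Tendsto (fun t : ℝ => (g (xstar + t • u) - g xstar) / t) (𝓝[>] 0)
          (𝓝 ⟪g' xstar, u⟫) :=
        (aux_slope_stmt12 (hg' xstar) u).mono_left
          (nhdsWithin_mono 0 (fun t ht => ne_of_gt ht))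
      refine ge_of_tendsto htend ?_
      filter_upwards [self_mem_nhdsWithin] with t ht
      exact key t ht
    have heq : ∀ u : EuclideanSpace ℝ (Fin d), ⟪v, u⟫ = ⟪g' xstar, u⟫ := by
      intro u
      have h1 := hineq u
      have h2 := hineq (-u)
      rw [inner_neg_right, inner_neg_right] at h2
      linarith
    exact ext_inner_right ℝ (fun u => heq u)
end

section
/- Let g, h : ℝ^d → ℝ be strongly convex with modulus ρ > 0, g continuously differentiable, f = g - h bounded below. Let x ∈ ℝ^d, u ∈ ∂h(x), and let y be the unique minimizer of z ↦ g(z) - ⟨u, z⟩. Set d = y - x. Then f(y) ≤ f(x) - ρ‖d‖². -/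
open scoped RealInnerProductSpace

lemma strong_ineq' {n : ℕ} (f : EuclideanSpace ℝ (Fin n) → ℝ) (ρ : ℝ)
    (hf : ConvexOn ℝ Set.univ (fun x => f x - ρ / 2 * ‖x‖ ^ 2))
    (a b : EuclideanSpace ℝ (Fin n)) {t : ℝ} (ht : 0 ≤ t) (ht1 : t ≤ 1) :
    f ((1 - t) • a + t • b) ≤ (1 - t) * f a + t * f b - ρ / 2 * ((1 - t) * t) * ‖a - b‖ ^ 2 := by
  have := (strongConvexOn_iff_convex.2 hf).2 (Set.mem_univ a) (Set.mem_univ b)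
    (by linarith : (0:ℝ) ≤ 1 - t) ht (by ring)
  simp only [smul_eq_mul] at this
  linarith

lemma limit_ineq {A B C k : ℝ} (hk : 0 ≤ k) (hC : 0 ≤ C)
    (h : ∀ t : ℝ, 0 < t → t < 1 → A ≤ B - k * (1 - t) * C) : A ≤ B - k * C := by
  rcases eq_or_lt_of_le (mul_nonneg hk hC) with hkC | hkC
  · have := h (1/2) (by norm_num) (by norm_num)
    nlinarith
  · have key : k * C ≤ B - A := by
      refine le_of_forall_pos_le_add fun ε hε => ?_
      set t := min (ε / (k * C)) (1/2) with htdef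
      have ht0 : 0 < t := lt_min (div_pos hε hkC) (by norm_num)
      have ht1 : t < 1 := lt_of_le_of_lt (min_le_right _ _) (by norm_num)
      have := h t ht0 ht1
      have htkC : t * (k * C) ≤ ε := by
        calc t * (k * C) ≤ (ε / (k * C)) * (k * C) := by
              apply mul_le_mul_of_nonneg_right (min_le_left _ _) (le_of_lt hkC)
          _ = ε := div_mul_cancel₀ _ (ne_of_gt hkC)
      nlinarith
    linarith

/-- BDCA descent: with `g, h` `ρ`-strongly convex, `g` continuously differentiable,
`f = g - h` bounded below, `u ∈ ∂h(x)` and `y` the (unique) minimizer of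
`z ↦ g(z) - ⟪u,z⟫`, setting `d = y - x` one has `f(y) ≤ f(x) - ρ‖d‖²`. -/
theorem stmt_13 {n : ℕ} (g h : EuclideanSpace ℝ (Fin n) → ℝ)
    (ρ : ℝ) (hρ : 0 < ρ)
    (hg : ConvexOn ℝ Set.univ (fun x => g x - ρ / 2 * ‖x‖ ^ 2))
    (hh : ConvexOn ℝ Set.univ (fun x => h x - ρ / 2 * ‖x‖ ^ 2))
    (hg1 : ContDiff ℝ 1 g)
    (hbdd : ∃ m : ℝ, ∀ x, m ≤ g x - h x)
    (x u y : EuclideanSpace ℝ (Fin n))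
    (hu : ∀ z, ⟪u, z - x⟫ ≤ h z - h x)
    (hy : ∀ z, g y - ⟪u, y⟫ ≤ g z - ⟪u, z⟫) :
    g y - h y ≤ g x - h x - ρ * ‖y - x‖ ^ 2 := by
  have hC : (0:ℝ) ≤ ‖y - x‖ ^ 2 := by positivity
  have hk : (0:ℝ) ≤ ρ / 2 := by linarith
  -- g side: g y - ⟪u,y⟫ ≤ g x - ⟪u,x⟫ - ρ/2 ‖y-x‖²
  have gside : g y - ⟪u, y⟫ ≤ (g x - ⟪u, x⟫) - ρ / 2 * ‖y - x‖ ^ 2 := by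
    apply limit_ineq hk hC
    intro t ht0 ht1
    set z := (1 - t) • y + t • x with hz
    have h1 := hy z
    have h2 := strong_ineq' g ρ hg y x (le_of_lt ht0) (le_of_lt ht1)
    have h3 : ⟪u, z⟫ = (1 - t) * ⟪u, y⟫ + t * ⟪u, x⟫ := by
      rw [hz, inner_add_right, real_inner_smul_right, real_inner_smul_right]
    rw [h3] at h1
    -- from h1, h2: t * (g y - ⟪u,y⟫) ≤ t * (g x - ⟪u,x⟫) - ρ/2 (1-t) t ‖y-x‖²
    have h4 : t * (g y - ⟪u, y⟫) ≤ t * (g x - ⟪u, x⟫) - ρ / 2 * ((1 - t) * t) * ‖y - x‖ ^ 2 := by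
      nlinarith
    have h5 : g y - ⟪u, y⟫ ≤ (g x - ⟪u, x⟫) - ρ / 2 * (1 - t) * ‖y - x‖ ^ 2 := by
      rw [← mul_le_mul_iff_right₀ ht0]
      calc t * (g y - ⟪u, y⟫) ≤ t * (g x - ⟪u, x⟫) - ρ / 2 * ((1 - t) * t) * ‖y - x‖ ^ 2 := h4
        _ = t * ((g x - ⟪u, x⟫) - ρ / 2 * (1 - t) * ‖y - x‖ ^ 2) := by ring
    exact h5
  -- h side: h x + ⟪u, y - x⟫ + ρ/2 ‖y-x‖² ≤ h y
  have hside : h x + ⟪u, y - x⟫ + ρ / 2 * ‖y - x‖ ^ 2 ≤ h y := by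
    have key : (0:ℝ) ≤ (h y - h x - ⟪u, y - x⟫) - ρ / 2 * ‖y - x‖ ^ 2 := by
      refine limit_ineq (A := (0:ℝ)) (B := h y - h x - ⟪u, y - x⟫)
        (C := ‖y - x‖ ^ 2) (k := ρ / 2) hk hC ?_
      intro t ht0 ht1
      have h2 := strong_ineq' h ρ hh x y (le_of_lt ht0) (le_of_lt ht1)
      set z := (1 - t) • x + t • y with hz
      have h1 := hu z
      have h3 : ⟪u, z - x⟫ = t * ⟪u, y - x⟫ := by
        have : z - x = t • (y - x) := by
          rw [hz]; module
        rw [this, real_inner_smul_right]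
      rw [h3] at h1
      have hnorm : ‖x - y‖ = ‖y - x‖ := norm_sub_rev x y
      rw [hnorm] at h2
      -- h1 : t⟪u,y-x⟫ ≤ h z - h x ; h2 : h z ≤ (1-t) h x + t h y - ρ/2 (1-t)t ‖y-x‖²
      have h4 : t * (ρ / 2 * (1 - t) * ‖y - x‖ ^ 2) ≤ t * (h y - h x - ⟪u, y - x⟫) := by
        nlinarith
      have := (mul_le_mul_iff_right₀ ht0).mp h4
      linarith
    linarith
  have huyx : ⟪u, y - x⟫ = ⟪u, y⟫ - ⟪u, x⟫ := inner_sub_right u y x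
  rw [huyx] at hside
  linarith
end

section
/- Under the same assumptions, with y the unique minimizer of z ↦ g(z) - ⟨u, z⟩ for some u ∈ ∂h(x) and d = y - x, the directional derivative of f at y in direction d satisfies f'(y; d) ≤ -ρ‖d‖². -/
set_option maxHeartbeats 800000

open scoped RealInnerProductSpace

/-- BDCA descent direction: under the assumptions of the BDCA, with `d = y - x`,
the one-sided directional derivative of `f = g - h` at `y` in direction `d`
exists and satisfies `f'(y; d) ≤ -ρ‖d‖²`. -/
theorem stmt_14 {n : ℕ} (g h : EuclideanSpace ℝ (Fin n) → ℝ)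
    (ρ : ℝ) (hρ : 0 < ρ)
    (hg : ConvexOn ℝ Set.univ (fun x => g x - ρ / 2 * ‖x‖ ^ 2))
    (hh : ConvexOn ℝ Set.univ (fun x => h x - ρ / 2 * ‖x‖ ^ 2))
    (hg1 : ContDiff ℝ 1 g)
    (hbdd : ∃ m : ℝ, ∀ x, m ≤ g x - h x)
    (x u y : EuclideanSpace ℝ (Fin n))
    (hu : ∀ z, ⟪u, z - x⟫ ≤ h z - h x)
    (hy : ∀ z, g y - ⟪u, y⟫ ≤ g z - ⟪u, z⟫) :
    ∃ L : ℝ,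
      Filter.Tendsto
        (fun t : ℝ => ((g (y + t • (y - x)) - h (y + t • (y - x))) - (g y - h y)) / t)
        (nhdsWithin 0 (Set.Ioi 0)) (nhds L) ∧
      L ≤ -ρ * ‖y - x‖ ^ 2 := by
  classical
  set d : EuclideanSpace ℝ (Fin n) := y - x with hd
  -- strong convexity of h
  have hh' : StrongConvexOn Set.univ ρ h := strongConvexOn_iff_convex.mpr hh
  have hhc : ConvexOn ℝ Set.univ h := hh'.convexOn (fun r => by positivity)
  -- line map
  set ℓ : ℝ →ᵃ[ℝ] EuclideanSpace ℝ (Fin n) := AffineMap.lineMap y (y + d) with hℓ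
  have hℓapp : ∀ t : ℝ, ℓ t = y + t • d := by
    intro t
    simp [hℓ, AffineMap.lineMap_apply]
    abel
  -- convexity along the line
  have hr : ConvexOn ℝ Set.univ (fun t : ℝ => h (y + t • d)) := by
    have := hhc.comp_affineMap ℓ
    rw [Set.preimage_univ] at this
    have e : (fun t : ℝ => h (y + t • d)) = h ∘ ℓ := by
      funext t
      simp [Function.comp, hℓapp t]
    rw [e]
    exact this
  have hr0 : ConvexOn ℝ Set.univ (fun t : ℝ => h (y + t • d) - ρ / 2 * ‖y + t • d‖ ^ 2) := by
    have := hh.comp_affineMap ℓ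
    rw [Set.preimage_univ] at this
    have e : (fun t : ℝ => h (y + t • d) - ρ / 2 * ‖y + t • d‖ ^ 2) = (fun x => h x - ρ / 2 * ‖x‖ ^ 2) ∘ ℓ := by
      funext t
      simp [Function.comp, hℓapp t]
    rw [e]
    exact this
  -- difference quotients
  set q : ℝ → ℝ := fun t => (h (y + t • d) - h y) / t with hq
  set q0 : ℝ → ℝ := fun t =>
      ((h (y + t • d) - ρ / 2 * ‖y + t • d‖ ^ 2) - (h y - ρ / 2 * ‖y‖ ^ 2)) / t with hq0
  have hy0 : y + (0 : ℝ) • d = y := by simp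
  have hnorm : ∀ t : ℝ, ‖y + t • d‖ ^ 2 = ‖y‖ ^ 2 + 2 * t * ⟪y, d⟫ + t ^ 2 * ‖d‖ ^ 2 := by
    intro t
    rw [norm_add_sq_real, real_inner_smul_right, norm_smul]
    rw [Real.norm_eq_abs, mul_pow, sq_abs]
    ring
  have hqq0 : ∀ t : ℝ, t ≠ 0 → q t = q0 t + ρ * ⟪y, d⟫ + t * (ρ / 2 * ‖d‖ ^ 2) := by
    intro t ht
    simp only [hq, hq0, hnorm t]
    field_simp
    ring
  -- monotonicity of q on (0,1)
  have hqmono : MonotoneOn q (Set.Ioo (0 : ℝ) 1) := by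
    intro t₁ ht₁ t₂ ht₂ hle
    have := hr.secant_mono (a := 0) (Set.mem_univ _) (Set.mem_univ _) (Set.mem_univ _)
      (ne_of_gt ht₁.1) (ne_of_gt ht₂.1) hle
    simpa [hq, hy0] using this
  -- lower bound for q on (0,1)
  set B : ℝ := ((h y - ρ / 2 * ‖y‖ ^ 2) - (h x - ρ / 2 * ‖x‖ ^ 2)) + ρ * ⟪y, d⟫ with hB
  have hxd : y + -d = x := by rw [hd]; abel
  have hqB : ∀ t ∈ Set.Ioo (0 : ℝ) 1, B ≤ q t := by
    intro t ht
    have h1 : (h x - ρ / 2 * ‖x‖ ^ 2 - (h y - ρ / 2 * ‖y‖ ^ 2)) / (-1) ≤ q0 t := by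
      have h5 := hr0.secant_mono (a := 0) (x := -1) (y := t) (Set.mem_univ _) (Set.mem_univ _)
        (Set.mem_univ _) (by norm_num) (ne_of_gt ht.1) (by linarith [ht.1])
      simp only [sub_zero, neg_one_smul, zero_smul, add_zero] at h5
      rw [hxd] at h5
      exact h5
    have h2 : (h x - ρ / 2 * ‖x‖ ^ 2 - (h y - ρ / 2 * ‖y‖ ^ 2)) / (-1)
        = (h y - ρ / 2 * ‖y‖ ^ 2) - (h x - ρ / 2 * ‖x‖ ^ 2) := by ring
    have h3 := hqq0 t (ne_of_gt ht.1)
    have h4 : 0 ≤ t * (ρ / 2 * ‖d‖ ^ 2) := mul_nonneg (le_of_lt ht.1) (by positivity)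
    rw [h2] at h1
    rw [hB]
    linarith
  -- the limit of q as t → 0⁺
  set Lh : ℝ := sInf (q '' Set.Ioo 0 1) with hLh
  have hqbdd : BddBelow (q '' Set.Ioo (0 : ℝ) 1) :=
    ⟨B, fun b ⟨t, ht, hbt⟩ => hbt ▸ hqB t ht⟩
  have hqtend : Filter.Tendsto q (nhdsWithin 0 (Set.Ioi 0)) (nhds Lh) :=
    MonotoneOn.tendsto_nhdsWithin_Ioo_right ⟨1/2, by norm_num⟩ hqmono hqbdd
  have hLhB : B ≤ Lh :=
    le_csInf (⟨q (1/2), ⟨1/2, by norm_num, rfl⟩⟩) (fun b ⟨t, ht, hbt⟩ => hbt ▸ hqB t ht)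
  -- gradient of g at y equals u
  have hdiff : Differentiable ℝ g := hg1.differentiable one_ne_zero
  have hinner : HasFDerivAt (fun z : EuclideanSpace ℝ (Fin n) => ⟪u, z⟫)
      (innerSL ℝ u) y := (innerSL ℝ u).hasFDerivAt
  have hF : HasFDerivAt (fun z => g z - ⟪u, z⟫) (fderiv ℝ g y - innerSL ℝ u) y :=
    (hdiff y).hasFDerivAt.sub hinner
  have hmin : IsLocalMin (fun z => g z - ⟪u, z⟫) y :=
    Filter.Eventually.of_forall hy
  have hgrad : fderiv ℝ g y = innerSL ℝ u := by
    have := hmin.hasFDerivAt_eq_zero hF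
    rwa [sub_eq_zero] at this
  -- derivative of g along the line
  have hline : HasDerivAt (fun t : ℝ => y + t • d) d 0 := by
    simpa using ((hasDerivAt_id (0 : ℝ)).smul_const d).const_add y
  have hgd : HasDerivAt (fun t : ℝ => g (y + t • d)) ⟪u, d⟫ 0 := by
    have := (hdiff (y + (0 : ℝ) • d)).hasFDerivAt.comp_hasDerivAt 0 hline
    rw [hy0, hgrad] at this
    simp at this
    exact this
  have hgtend : Filter.Tendsto (fun t : ℝ => (g (y + t • d) - g y) / t)
      (nhdsWithin 0 (Set.Ioi 0)) (nhds ⟪u, d⟫) := by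
    have h1 := hasDerivAt_iff_tendsto_slope.mp hgd
    have h2 : Filter.Tendsto (slope (fun t : ℝ => g (y + t • d)) 0)
        (nhdsWithin 0 (Set.Ioi 0)) (nhds ⟪u, d⟫) :=
      h1.mono_left (nhdsWithin_mono _ (fun t ht => ne_of_gt ht))
    refine h2.congr' ?_
    filter_upwards [self_mem_nhdsWithin] with t ht
    simp [slope_def_field, hy0]
  -- the limit L
  refine ⟨⟪u, d⟫ - Lh, ?_, ?_⟩
  · have := hgtend.sub hqtend
    refine this.congr (fun t => ?_)
    simp only [hq]
    ring
  · -- strong subgradient inequality at x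
    have hS : ⟪u, d⟫ + ρ / 2 * ‖d‖ ^ 2 ≤ h y - h x := by
      have key : ∀ t ∈ Set.Ioo (0 : ℝ) 1,
          ⟪u, d⟫ + ρ / 2 * ‖d‖ ^ 2 - t * (ρ / 2 * ‖d‖ ^ 2) ≤ h y - h x := by
        intro t ht
        have h2' := hh'.2
        have hconv := h2' (Set.mem_univ x) (Set.mem_univ y)
          (show (0:ℝ) ≤ 1 - t by linarith [ht.2]) (le_of_lt ht.1)
          (show (1 - t) + t = 1 by ring)
        have hz := hu ((1 - t) • x + t • y)
        have hzx : (1 - t) • x + t • y - x = t • d := by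
          simp [hd]
          module
        rw [hzx, real_inner_smul_right] at hz
        have hnd : ‖x - y‖ = ‖d‖ := by rw [hd, norm_sub_rev]
        rw [hnd] at hconv
        simp only [smul_eq_mul] at hconv
        nlinarith [ht.1, ht.2, mul_pos ht.1 (sub_pos.mpr ht.2)]
      have htend : Filter.Tendsto
          (fun t : ℝ => ⟪u, d⟫ + ρ / 2 * ‖d‖ ^ 2 - t * (ρ / 2 * ‖d‖ ^ 2))
          (nhdsWithin 0 (Set.Ioi 0)) (nhds (⟪u, d⟫ + ρ / 2 * ‖d‖ ^ 2)) := by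
        have : Filter.Tendsto
            (fun t : ℝ => ⟪u, d⟫ + ρ / 2 * ‖d‖ ^ 2 - t * (ρ / 2 * ‖d‖ ^ 2))
            (nhds 0) (nhds (⟪u, d⟫ + ρ / 2 * ‖d‖ ^ 2)) := by
          have := (continuous_const.sub (continuous_id.mul continuous_const)).tendsto (0:ℝ)
            (f := fun t : ℝ => ⟪u, d⟫ + ρ / 2 * ‖d‖ ^ 2 - t * (ρ / 2 * ‖d‖ ^ 2))
          simpa using this
        exact this.mono_left nhdsWithin_le_nhds
      refine le_of_tendsto htend ?_
      filter_upwards [Ioo_mem_nhdsGT_of_mem (Set.mem_Ico.mpr ⟨le_refl 0, zero_lt_one⟩)]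
        with t ht using key t ht
    -- inner product identities
    have hyx : y = x + d := by rw [hd]; abel
    have hyd : ⟪y, d⟫ = ⟪x, d⟫ + ‖d‖ ^ 2 := by
      rw [hyx, inner_add_left, real_inner_self_eq_norm_sq]
    have hny : ‖y‖ ^ 2 = ‖x‖ ^ 2 + 2 * ⟪x, d⟫ + ‖d‖ ^ 2 := by
      rw [hyx, norm_add_sq_real]
    have hBlow : ⟪u, d⟫ + ρ * ‖d‖ ^ 2 ≤ B := by
      rw [hB, hyd, hny]
      nlinarith [hS]
    linarith [hLhB]
end

section
/- Under the same assumptions, for any α > 0 there exists δ > 0 such that f(y + λ d) ≤ f(y) - α λ² ‖d‖² for all λ ∈ [0, δ]; consequently the backtracking line search of BDCA terminates in finitely many steps. -/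
open scoped RealInnerProductSpace

lemma sc_helper {n : ℕ} (h : EuclideanSpace ℝ (Fin n) → ℝ) (ρ : ℝ)
    (hh : ConvexOn ℝ Set.univ (fun x => h x - ρ / 2 * ‖x‖ ^ 2))
    (a b : EuclideanSpace ℝ (Fin n)) (t s : ℝ) (ht : 0 ≤ t) (hs : 0 ≤ s) (hts : t + s = 1) :
    h (t • a + s • b) ≤ t * h a + s * h b - ρ / 2 * (t * s) * ‖a - b‖ ^ 2 := by
  have key := hh.2 (Set.mem_univ a) (Set.mem_univ b) ht hs hts
  simp only [smul_eq_mul] at key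
  have hid : ‖t • a + s • b‖ ^ 2
      = t ^ 2 * ‖a‖ ^ 2 + 2 * t * s * ⟪a, b⟫ + s ^ 2 * ‖b‖ ^ 2 := by
    rw [← real_inner_self_eq_norm_sq]
    simp only [inner_add_left, inner_add_right, real_inner_smul_left, real_inner_smul_right,
      real_inner_comm b a]
    rw [real_inner_self_eq_norm_sq, real_inner_self_eq_norm_sq]
    ring
  have hsub : ‖a - b‖ ^ 2 = ‖a‖ ^ 2 - 2 * ⟪a, b⟫ + ‖b‖ ^ 2 := by
    rw [← real_inner_self_eq_norm_sq]
    simp only [inner_sub_left, inner_sub_right, real_inner_self_eq_norm_sq,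
      real_inner_comm b a]
    ring
  have expand : t * h a + s * h b - ρ / 2 * (t * s) * ‖a - b‖ ^ 2
      = t * (h a - ρ / 2 * ‖a‖ ^ 2) + s * (h b - ρ / 2 * ‖b‖ ^ 2)
        + ρ / 2 * ‖t • a + s • b‖ ^ 2 := by
    rw [hid, hsub]
    have hs1 : s = 1 - t := by linarith
    subst hs1; ring
  rw [expand]
  linarith [key]

/-- Finite termination of the BDCA backtracking: under the BDCA assumptions with
`d = y - x ≠ 0`, for every `α > 0` there is `δ > 0` such that
`f(y + λd) ≤ f(y) - αλ²‖d‖²` for all `λ ∈ [0, δ]`. -/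
theorem stmt_15 {n : ℕ} (g h : EuclideanSpace ℝ (Fin n) → ℝ)
    (ρ : ℝ) (hρ : 0 < ρ)
    (hg : ConvexOn ℝ Set.univ (fun x => g x - ρ / 2 * ‖x‖ ^ 2))
    (hh : ConvexOn ℝ Set.univ (fun x => h x - ρ / 2 * ‖x‖ ^ 2))
    (hg1 : ContDiff ℝ 1 g)
    (hbdd : ∃ m : ℝ, ∀ x, m ≤ g x - h x)
    (x u y : EuclideanSpace ℝ (Fin n))
    (hu : ∀ z, ⟪u, z - x⟫ ≤ h z - h x)
    (hy : ∀ z, g y - ⟪u, y⟫ ≤ g z - ⟪u, z⟫)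
    (hd : y - x ≠ 0)
    (α : ℝ) (hα : 0 < α) :
    ∃ δ > 0, ∀ lam ∈ Set.Icc (0 : ℝ) δ,
      g (y + lam • (y - x)) - h (y + lam • (y - x)) ≤
        (g y - h y) - α * lam ^ 2 * ‖y - x‖ ^ 2 := by
  set d := y - x with hd_def
  have hdg : Differentiable ℝ g := hg1.differentiable one_ne_zero
  have hdpos : (0:ℝ) < ‖d‖ := norm_pos_iff.mpr hd
  -- gradient of g at y equals u
  have hFmin : IsLocalMin (fun z => g z - ⟪u, z⟫) y := Filter.Eventually.of_forall hy
  have hFd : HasFDerivAt (fun z => g z - ⟪u, z⟫) (fderiv ℝ g y - innerSL ℝ u) y :=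
    (hdg y).hasFDerivAt.sub ((innerSL ℝ u).hasFDerivAt)
  have hzero : fderiv ℝ g y - innerSL ℝ u = 0 := hFmin.hasFDerivAt_eq_zero hFd
  have hgrad : fderiv ℝ g y d = ⟪u, d⟫ := by
    have := sub_eq_zero.mp hzero
    rw [this]; rfl
  -- derivative of t ↦ g (y + t • d) at 0
  have hc : HasDerivAt (fun t : ℝ => y + t • d) d 0 := by
    simpa using ((hasDerivAt_id (0:ℝ)).smul_const d).const_add y
  have hG : HasDerivAt (fun t : ℝ => g (y + t • d)) (⟪u, d⟫) 0 := by
    have := (hdg (y + (0:ℝ) • d)).hasFDerivAt.comp_hasDerivAt (0:ℝ) hc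
    simp only [Function.comp_def, zero_smul, add_zero, hgrad] at this
    exact this
  have hψ : HasDerivAt (fun t : ℝ => g (y + t • d) - g y - t * ⟪u, d⟫) 0 0 := by
    have := (hG.sub_const (g y)).sub ((hasDerivAt_id (0:ℝ)).mul_const ⟪u, d⟫)
    simp only [one_mul, sub_self] at this
    exact this
  have ho : (fun t : ℝ => g (y + t • d) - g y - t * ⟪u, d⟫) =o[nhds 0] fun t : ℝ => t := by
    have := hasDerivAt_iff_isLittleO.mp hψ
    simpa using this
  have hbound := Asymptotics.isLittleO_iff.mp ho
    (show (0:ℝ) < ρ * ‖d‖ ^ 2 / 4 by positivity)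
  rw [Metric.eventually_nhds_iff] at hbound
  obtain ⟨ε, hε, hball⟩ := hbound
  refine ⟨min (ε / 2) (ρ / (4 * α)), by positivity, ?_⟩
  rintro lam ⟨hlam0, hlam1⟩
  have hlamε : lam < ε := lt_of_le_of_lt (hlam1.trans (min_le_left _ _)) (by linarith)
  have hlamρ : α * lam ≤ ρ / 4 := by
    have h3 := hlam1.trans (min_le_right _ _)
    rw [le_div_iff₀ (by positivity)] at h3
    nlinarith [h3]
  -- bound on g
  have hA : g (y + lam • d) - g y - lam * ⟪u, d⟫ ≤ ρ * ‖d‖ ^ 2 / 4 * lam := by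
    have := hball (show dist lam 0 < ε by simpa [abs_of_nonneg hlam0] using hlamε)
    rw [Real.norm_eq_abs, Real.norm_eq_abs, abs_of_nonneg hlam0] at this
    calc g (y + lam • d) - g y - lam * ⟪u, d⟫
        ≤ |g (y + lam • d) - g y - lam * ⟪u, d⟫| := le_abs_self _
      _ ≤ ρ * ‖d‖ ^ 2 / 4 * lam := this
  -- bound on h via strong convexity
  have h1lam : (0:ℝ) < 1 + lam := by linarith
  have hcombo : (1/(1+lam)) • (y + lam • d) + (lam/(1+lam)) • x = y := by
    rw [hd_def]
    match_scalars <;> field_simp <;> ring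
  have hnormeq : ‖(y + lam • d) - x‖ ^ 2 = (1 + lam) ^ 2 * ‖d‖ ^ 2 := by
    have he : (y + lam • d) - x = (1 + lam) • d := by rw [hd_def]; module
    rw [he, norm_smul, Real.norm_eq_abs, abs_of_pos h1lam, mul_pow]
  have hkey := sc_helper h ρ hh (y + lam • d) x (1/(1+lam)) (lam/(1+lam))
    (by positivity) (by positivity) (by field_simp)
  rw [hcombo, hnormeq] at hkey
  have hB : h y + lam * (h y - h x) + ρ / 2 * lam * (1 + lam) * ‖d‖ ^ 2
      ≤ h (y + lam • d) := by
    have h2 := mul_le_mul_of_nonneg_left hkey (le_of_lt h1lam)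
    have hne : (1 + lam) ≠ 0 := ne_of_gt h1lam
    have e1 : (1 + lam) * (1 / (1 + lam) * h (y + lam • d) + lam / (1 + lam) * h x -
        ρ / 2 * (1 / (1 + lam) * (lam / (1 + lam))) * ((1 + lam) ^ 2 * ‖d‖ ^ 2))
        = h (y + lam • d) + lam * h x - ρ / 2 * lam * (1 + lam) * ‖d‖ ^ 2 := by
      field_simp
    rw [e1] at h2
    ring_nf at h2 ⊢
    linarith
  have hud : ⟪u, d⟫ ≤ h y - h x := hu y
  have hud' : lam * ⟪u, d⟫ ≤ lam * (h y - h x) := mul_le_mul_of_nonneg_left hud hlam0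
  have hstep0 : α * lam * (lam * ‖d‖ ^ 2) ≤ ρ / 4 * (lam * ‖d‖ ^ 2) :=
    mul_le_mul_of_nonneg_right hlamρ (mul_nonneg hlam0 (sq_nonneg ‖d‖))
  have hpos : 0 ≤ ρ / 2 * lam ^ 2 * ‖d‖ ^ 2 := by positivity
  linarith [hA, hB, hud', hstep0, hpos]
end
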